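/- Let G(E*_max) be the undirected graph whose vertices are the events of a maximal subgraph E*_max, with an edge between two events whenever they are Δt-adjacent and consecutive for one of their shared nodes (i.e., one is the next or previous Δt-adjacent event of the other at some common node). Then every valid temporal subgraph contained in E*_max induces a connected subgraph of G(E*_max): for any valid subgraph E* ⊆ E*_max and any two events in E*, there is a path in G(E*_max) between them using only vertices of E*. -/

import Mathlib

/-- An event `(n₁, n₂, t, δ)` connects nodes `n₁ → n₂` during `[t, t+δ]`. -/
structure Event where
  n1 : ℕ
  n2 : ℕ
  t : ℝ
  δ : ℝ

/-- Two events share at least one node. -/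
def sharesNode (e f : Event) : Prop :=
  e.n1 = f.n1 ∨ e.n1 = f.n2 ∨ e.n2 = f.n1 ∨ e.n2 = f.n2

/-- Two events are Δt-adjacent if they share a node and the time gap between
the end of the earlier event and the start of the later one is at most Δt. -/
def adjacent (Δt : ℝ) (e f : Event) : Prop :=
  sharesNode e f ∧ f.t - (e.t + e.δ) ≤ Δt ∧ e.t - (f.t + f.δ) ≤ Δt

/-- Δt-connectivity within a set of events: joined by a sequence of
consecutively Δt-adjacent events, all lying in the set. -/
def connectedIn (Δt : ℝ) (E : Set Event) (e f : Event) : Prop :=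
  Relation.ReflTransGen (fun a b => a ∈ E ∧ b ∈ E ∧ adjacent Δt a b) e f

/-- Event `e` involves node `v`. -/
def hasNode (e : Event) (v : ℕ) : Prop :=
  e.n1 = v ∨ e.n2 = v

/-!
A Δt-adjacency step between two events `x`, `y` of `S` happens at a common node `v`. Walking
from the earlier to the later one through the events of `M` at `v`, consecutive events are
Δt-adjacent by hypothesis and consecutive by construction, hence edges of `G(M)`, and they all lie
in `S` because `S` is consecutive at `v` within `M`. If `x` and `y` happen at the same time, they
are joined by an edge of `G(M)` directly.
-/

theorem sharesNode.exists_hasNode {e f : Event} (h : sharesNode e f) :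
    ∃ v, hasNode e v ∧ hasNode f v := by
  rcases h with h | h | h | h
  · exact ⟨e.n1, .inl rfl, .inl h.symm⟩
  · exact ⟨e.n1, .inl rfl, .inr h.symm⟩
  · exact ⟨e.n2, .inr rfl, .inl h.symm⟩
  · exact ⟨e.n2, .inr rfl, .inr h.symm⟩

theorem sharesNode.symm {e f : Event} (h : sharesNode e f) : sharesNode f e := by
  unfold sharesNode at *
  tauto

theorem adjacent.symm {Δt : ℝ} {e f : Event} (h : adjacent Δt e f) : adjacent Δt f e :=
  ⟨h.1.symm, h.2.2, h.2.1⟩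

def NoEventBetween (M : Finset Event) (v : ℕ) (s t : ℝ) : Prop :=
  ∀ m ∈ M, hasNode m v → ¬(s < m.t ∧ m.t < t)

open scoped Classical in
noncomputable def eventsBetween (M : Finset Event) (v : ℕ) (s t : ℝ) : Finset Event :=
  M.filter fun m => hasNode m v ∧ s < m.t ∧ m.t < t

theorem mem_eventsBetween {M : Finset Event} {v : ℕ} {s t : ℝ} {m : Event} :
    m ∈ eventsBetween M v s t ↔ m ∈ M ∧ hasNode m v ∧ s < m.t ∧ m.t < t := by
  simp [eventsBetween]

theorem eventsBetween_eq_empty_iff {M : Finset Event} {v : ℕ} {s t : ℝ} :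
    eventsBetween M v s t = ∅ ↔ NoEventBetween M v s t := by
  simp [Finset.eq_empty_iff_forall_notMem, mem_eventsBetween, NoEventBetween]

def eventGraphAdj (Δt : ℝ) (M : Finset Event) (a b : Event) : Prop :=
  a ∈ M ∧ b ∈ M ∧ adjacent Δt a b ∧
    ∃ v, hasNode a v ∧ hasNode b v ∧ NoEventBetween M v (min a.t b.t) (max a.t b.t)

theorem eventGraphAdj.symm {Δt : ℝ} {M : Finset Event} {a b : Event}
    (h : eventGraphAdj Δt M a b) : eventGraphAdj Δt M b a := by
  obtain ⟨ha, hb, hab, v, hav, hbv, hnone⟩ := h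
  exact ⟨hb, ha, hab.symm, v, hbv, hav, by rwa [min_comm, max_comm]⟩

theorem eventGraphAdj_of_noEventBetween {Δt : ℝ} {M : Finset Event} {a b : Event} {v : ℕ}
    (ha : a ∈ M) (hb : b ∈ M) (hab : adjacent Δt a b) (hav : hasNode a v) (hbv : hasNode b v)
    (hle : a.t ≤ b.t) (hnone : NoEventBetween M v a.t b.t) : eventGraphAdj Δt M a b :=
  ⟨ha, hb, hab, v, hav, hbv, by rwa [min_eq_left hle, max_eq_right hle]⟩

def ConsecutiveAdjacent (Δt : ℝ) (M : Finset Event) : Prop :=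
  ∀ a ∈ M, ∀ b ∈ M, ∀ v : ℕ, hasNode a v → hasNode b v → a.t < b.t →
    NoEventBetween M v a.t b.t → adjacent Δt a b

def IsNodeConvex (M S : Finset Event) : Prop :=
  ∀ v : ℕ, ∀ a ∈ S, ∀ b ∈ S, hasNode a v → hasNode b v →
    ∀ m ∈ M, hasNode m v → a.t < m.t → m.t < b.t → m ∈ S

section Chain

variable {Δt : ℝ} {M S : Finset Event}

/-- Each step goes to the next event of `M` at `v`, which lies in `S` by convexity. -/
theorem reflTransGen_eventGraphAdj_of_lt (hcons : ConsecutiveAdjacent Δt M) (hSM : S ⊆ M)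
    (hconv : IsNodeConvex M S) {v : ℕ} {x y : Event} (hx : x ∈ S) (hy : y ∈ S)
    (hxv : hasNode x v) (hyv : hasNode y v) (hxy : x.t < y.t) :
    Relation.ReflTransGen (fun a b => a ∈ S ∧ b ∈ S ∧ eventGraphAdj Δt M a b) x y := by
  induction hB : eventsBetween M v x.t y.t using Finset.strongInduction generalizing x with
  | H B ih =>
    have edge_of_noEventBetween {m : Event} (hm : m ∈ S) (hmv : hasNode m v) (hxm : x.t < m.t)
        (hnone : NoEventBetween M v x.t m.t) : eventGraphAdj Δt M x m :=
      eventGraphAdj_of_noEventBetween (hSM hx) (hSM hm)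
        (hcons x (hSM hx) m (hSM hm) v hxv hmv hxm hnone) hxv hmv hxm.le hnone
    rcases B.eq_empty_or_nonempty with rfl | hne
    · exact .single ⟨hx, hy, edge_of_noEventBetween hy hyv hxy (eventsBetween_eq_empty_iff.mp hB)⟩
    obtain ⟨m, hmB, hmin⟩ := B.exists_min_image Event.t hne
    subst hB
    obtain ⟨hmM, hmv, hxm, hmy⟩ := mem_eventsBetween.mp hmB
    have hmS : m ∈ S := hconv v x hx y hy hxv hyv m hmM hmv hxm hmy
    have hnone : NoEventBetween M v x.t m.t := fun m' hm' hm'v ⟨hxm', hm'm⟩ =>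
      (hmin m' (mem_eventsBetween.mpr ⟨hm', hm'v, hxm', hm'm.trans hmy⟩)).not_gt hm'm
    have hsub : eventsBetween M v m.t y.t ⊂ eventsBetween M v x.t y.t := by
      refine Finset.ssubset_iff_of_subset (fun m' hm' => ?_) |>.mpr ⟨m, hmB, ?_⟩
      · obtain ⟨hm'M, hm'v, hmm', hm'y⟩ := mem_eventsBetween.mp hm'
        exact mem_eventsBetween.mpr ⟨hm'M, hm'v, hxm.trans hmm', hm'y⟩
      · exact fun h => (mem_eventsBetween.mp h).2.2.1.false
    exact .head ⟨hx, hmS, edge_of_noEventBetween hmS hmv hxm hnone⟩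
      (ih _ hsub hmS hmv hmy rfl)

theorem reflTransGen_eventGraphAdj_of_adjacent (hcons : ConsecutiveAdjacent Δt M) (hSM : S ⊆ M)
    (hconv : IsNodeConvex M S) {x y : Event} (hx : x ∈ S) (hy : y ∈ S)
    (hxy : adjacent Δt x y) :
    Relation.ReflTransGen (fun a b => a ∈ S ∧ b ∈ S ∧ eventGraphAdj Δt M a b) x y := by
  obtain ⟨v, hxv, hyv⟩ := hxy.1.exists_hasNode
  rcases lt_trichotomy x.t y.t with hlt | heq | hgt
  · exact reflTransGen_eventGraphAdj_of_lt hcons hSM hconv hx hy hxv hyv hlt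
  · refine .single ⟨hx, hy, eventGraphAdj_of_noEventBetween (hSM hx) (hSM hy) hxy hxv hyv heq.le ?_⟩
    exact fun _ _ _ h => (heq ▸ h.1.trans h.2).false
  · have hyx := reflTransGen_eventGraphAdj_of_lt hcons hSM hconv hy hx hyv hxv hgt
    exact Relation.ReflTransGen.mono (fun _ _ h => ⟨h.2.1, h.1, h.2.2.symm⟩) _ _
      (Relation.reflTransGen_swap.mpr hyx)

end Chain

theorem valid_subgraph_connected_in_event_graph_general (Δt : ℝ) (M : Finset Event)
    -- consecutive events at a node within `M` are Δt-adjacent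
    (hconsAdj : ∀ a ∈ M, ∀ b ∈ M, ∀ v : ℕ, hasNode a v → hasNode b v → a.t < b.t →
      (∀ m ∈ M, hasNode m v → ¬((a.t < m.t) ∧ (m.t < b.t))) → adjacent Δt a b)
    -- the edges of the graph G(M)
    (Gedge : Event → Event → Prop)
    (hG : ∀ a b : Event, Gedge a b ↔ (a ∈ M ∧ b ∈ M ∧ adjacent Δt a b ∧
      ∃ v : ℕ, hasNode a v ∧ hasNode b v ∧
        ∀ m ∈ M, hasNode m v → ¬((min a.t b.t < m.t) ∧ (m.t < max a.t b.t))))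
    -- S is a valid temporal subgraph contained in M
    (S : Finset Event) (hSM : S ⊆ M)
    (hSconn : ∀ a ∈ S, ∀ b ∈ S, connectedIn Δt (↑S : Set Event) a b)
    (hSvalid : ∀ v : ℕ, ∀ a ∈ S, ∀ b ∈ S, hasNode a v → hasNode b v →
      ∀ m ∈ M, hasNode m v → a.t < m.t → m.t < b.t → m ∈ S) :
    ∀ a ∈ S, ∀ b ∈ S,
      Relation.ReflTransGen (fun x y => x ∈ S ∧ y ∈ S ∧ Gedge x y) a b := by
  obtain rfl : Gedge = eventGraphAdj Δt M := funext₂ fun a b => propext (hG a b)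
  intro a ha b hb
  refine Relation.reflTransGen_closed (fun x y ⟨hx, hy, hxy⟩ => ?_) _ _ (hSconn a ha b hb)
  exact reflTransGen_eventGraphAdj_of_adjacent hconsAdj hSM hSvalid hx hy hxy

/-- Every valid temporal subgraph `S` of a maximal subgraph `M` induces a
connected subgraph of the event graph `G(M)` (whose vertices are the events of
`M`, with an edge between Δt-adjacent events that are consecutive at a common
node): any two events of `S` are joined by a path of `G(M)`-edges lying in `S`. -/
theorem valid_subgraph_connected_in_event_graph (Δt : ℝ) (M : Finset Event)
    -- all pairs of events of the maximal subgraph are Δt-connected within it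
    (hMconn : ∀ a ∈ M, ∀ b ∈ M, connectedIn Δt (↑M : Set Event) a b)
    -- a node is involved in at most one event at a time
    (hdistinct : ∀ a ∈ M, ∀ b ∈ M, ∀ v : ℕ,
      hasNode a v → hasNode b v → a ≠ b → a.t ≠ b.t)
    -- consecutive events at a node within `M` are Δt-adjacent
    (hconsAdj : ∀ a ∈ M, ∀ b ∈ M, ∀ v : ℕ, hasNode a v → hasNode b v → a.t < b.t →
      (∀ m ∈ M, hasNode m v → ¬((a.t < m.t) ∧ (m.t < b.t))) → adjacent Δt a b)
    -- the edges of the graph G(M)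
    (Gedge : Event → Event → Prop)
    (hG : ∀ a b : Event, Gedge a b ↔ (a ∈ M ∧ b ∈ M ∧ adjacent Δt a b ∧
      ∃ v : ℕ, hasNode a v ∧ hasNode b v ∧
        ∀ m ∈ M, hasNode m v → ¬((min a.t b.t < m.t) ∧ (m.t < max a.t b.t))))
    -- S is a valid temporal subgraph contained in M
    (S : Finset Event) (hSM : S ⊆ M)
    (hSconn : ∀ a ∈ S, ∀ b ∈ S, connectedIn Δt (↑S : Set Event) a b)
    (hSvalid : ∀ v : ℕ, ∀ a ∈ S, ∀ b ∈ S, hasNode a v → hasNode b v →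
      ∀ m ∈ M, hasNode m v → a.t < m.t → m.t < b.t → m ∈ S) :
    ∀ a ∈ S, ∀ b ∈ S,
      Relation.ReflTransGen (fun x y => x ∈ S ∧ y ∈ S ∧ Gedge x y) a b :=
  valid_subgraph_connected_in_event_graph_general Δt M hconsAdj Gedge hG S hSM hSconn hSvalid
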